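/- arXiv:1812.03487 — 3 statements merged into one kernel-verified Lean document; each statement's English description precedes it below -/
import Mathlib

section
/- For q ∈ [1,3] and σ̂ with cos(σ̂π/2) = √q/2, one has cos(3σ̂π/2) ≤ 0, hence for any real numbers a_x ∈ [0,1], |2(e^{3iσ̂π/2} − 1) + (Σ_x 2a_x)(e^{iσ̂π/2} − e^{iσ̂π})·cos(3σ̂π/2)| ≥ 2|e^{iσ̂π/2} − 1|·(1 + √q). -/
/-!
With `θ = σπ/2`, `cos(3θ) = cos θ (4 cos² θ - 3) ≤ 0` since `0 ≤ cos θ = √q/2` and `q ≤ 3`.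
Both differences of exponentials factor through the midpoint `3θ/2`:
`e^{3iθ} - 1 = 2i sin(3θ/2) e^{3iθ/2}` and `e^{iθ} - e^{2iθ} = -2i sin(θ/2) e^{3iθ/2}`, so the
left-hand norm is `2 |2 sin(3θ/2) - S cos(3θ) sin(θ/2)|` with `S = Σ 2a_x ≥ 0`. The second term is
nonnegative, and `sin(3θ/2) = sin(θ/2)(1 + 2 cos θ) = sin(θ/2)(1 + √q)` while
`‖e^{iθ} - 1‖ = 2 sin(θ/2)`.
-/

open Real

namespace Complex

lemma exp_I_mul_add_sub_exp_I_mul_sub (m d : ℝ) :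
    exp (I * (m + d : ℝ)) - exp (I * (m - d : ℝ)) = 2 * I * Real.sin d * exp (I * m) := by
  have hadd : I * (m + d : ℝ) = d * I + I * m := by push_cast; ring
  have hsub : I * (m - d : ℝ) = -d * I + I * m := by push_cast; ring
  rw [hadd, hsub, exp_add, exp_add, ofReal_sin, sin]
  ring_nf
  rw [I_sq]
  ring

lemma norm_two_mul_exp_I_mul_three_sub_one_add (θ S c : ℝ) :
    ‖2 * (exp (I * (3 * θ)) - 1) + S * (exp (I * θ) - exp (I * (2 * θ))) * c‖ =
      2 * |2 * Real.sin (3 * (θ / 2)) - S * c * Real.sin (θ / 2)| := by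
  have hthree : exp (I * (3 * θ)) - 1 =
      2 * I * Real.sin (3 * (θ / 2)) * exp (I * (3 * (θ / 2) : ℝ)) := by
    rw [← exp_I_mul_add_sub_exp_I_mul_sub, sub_self, ofReal_zero, mul_zero, exp_zero]
    push_cast; ring_nf
  have hone_two : exp (I * θ) - exp (I * (2 * θ)) =
      2 * I * Real.sin (-(θ / 2)) * exp (I * (3 * (θ / 2) : ℝ)) := by
    rw [← exp_I_mul_add_sub_exp_I_mul_sub]
    push_cast; ring_nf
  rw [hthree, hone_two]
  have hfactor : 2 * (2 * I * Real.sin (3 * (θ / 2)) * exp (I * (3 * (θ / 2) : ℝ))) +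
      S * (2 * I * Real.sin (-(θ / 2)) * exp (I * (3 * (θ / 2) : ℝ))) * c =
      2 * I * exp (I * (3 * (θ / 2) : ℝ)) *
        ((2 * Real.sin (3 * (θ / 2)) - S * c * Real.sin (θ / 2) : ℝ) : ℂ) := by
    rw [Real.sin_neg]; push_cast; ring
  rw [hfactor, norm_mul, norm_mul, norm_mul, norm_exp_I_mul_ofReal, norm_real, norm_I,
    Real.norm_eq_abs]
  norm_num

end Complex

namespace Real

lemma cos_three_mul_nonpos {θ : ℝ} (h0 : 0 ≤ cos θ) (h3 : 4 * cos θ ^ 2 ≤ 3) :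
    cos (3 * θ) ≤ 0 := by
  rw [cos_three_mul]
  nlinarith

lemma sin_three_mul_eq_sin_mul_one_add_two_cos_two_mul (x : ℝ) :
    sin (3 * x) = sin x * (1 + 2 * cos (2 * x)) := by
  rw [sin_three_mul, cos_two_mul, cos_sq']
  ring

end Real

theorem stmt4_general (q σ : ℝ) (hq3 : q ≤ 3) (hσ0 : 0 < σ) (hσ1 : σ ≤ 1)
    (hcos : Real.cos (σ * π / 2) = Real.sqrt q / 2) :
    Real.cos (3 * (σ * π / 2)) ≤ 0 ∧
    ∀ (ι : Type) (_ : Fintype ι) (a : ι → ℝ), (∀ x, a x ∈ Set.Icc (0:ℝ) 1) →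
      2 * ‖Complex.exp (Complex.I * (σ * π / 2)) - 1‖ * (1 + Real.sqrt q) ≤
        ‖2 * (Complex.exp (Complex.I * (3 * (σ * π / 2))) - 1) +
          ((∑ x : ι, 2 * a x : ℝ) : ℂ) *
            (Complex.exp (Complex.I * (σ * π / 2)) - Complex.exp (Complex.I * (σ * π))) *
            ((Real.cos (3 * (σ * π / 2)) : ℝ) : ℂ)‖ := by
  set θ := σ * π / 2 with hθ
  have hcos3 : cos (3 * θ) ≤ 0 := by
    refine cos_three_mul_nonpos (hcos ▸ by positivity) ?_
    have := sqrt_le_sqrt hq3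
    nlinarith [sq_sqrt (show (0 : ℝ) ≤ 3 by norm_num), sqrt_nonneg q]
  refine ⟨hcos3, fun ι _ a ha => ?_⟩
  have hS : 0 ≤ ∑ x, 2 * a x := Finset.sum_nonneg fun x _ => by linarith [(ha x).1]
  have hsin : 0 ≤ sin (θ / 2) :=
    sin_nonneg_of_nonneg_of_le_pi (by positivity) (by nlinarith [pi_pos])
  have hsin3 : sin (3 * (θ / 2)) = sin (θ / 2) * (1 + sqrt q) := by
    rw [sin_three_mul_eq_sin_mul_one_add_two_cos_two_mul, mul_div_cancel₀ θ two_ne_zero, hcos]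
    ring
  have hθc : (σ : ℂ) * π / 2 = θ := by rw [hθ]; push_cast; ring
  have h2θc : (σ : ℂ) * π = 2 * θ := by rw [hθ]; push_cast; ring
  rw [hθc, h2θc, Complex.norm_two_mul_exp_I_mul_three_sub_one_add,
    Complex.norm_exp_I_mul_ofReal_sub_one, norm_mul, Real.norm_two, norm_of_nonneg hsin, hsin3]
  have hcross : 0 ≤ (∑ x, 2 * a x) * -cos (3 * θ) * sin (θ / 2) :=
    mul_nonneg (mul_nonneg hS (neg_nonneg.2 hcos3)) hsin
  have hmain : 0 ≤ sin (θ / 2) * (1 + √q) := mul_nonneg hsin (by positivity)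
  rw [abs_of_nonneg (by linarith)]
  linarith

/-- For `q ∈ [1,3]` and `σ̂` with `cos(σ̂π/2) = √q/2`, one has `cos(3σ̂π/2) ≤ 0`, and for
any finitely many numbers `a_x ∈ [0,1]`,
`|2(e^{3iσ̂π/2} − 1) + (Σ_x 2a_x)(e^{iσ̂π/2} − e^{iσ̂π})·cos(3σ̂π/2)| ≥ 2|e^{iσ̂π/2} − 1|(1+√q)`. -/
theorem stmt4 (q σ : ℝ) (hq1 : 1 ≤ q) (hq3 : q ≤ 3) (hσ0 : 0 < σ) (hσ1 : σ ≤ 1)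
    (hcos : Real.cos (σ * π / 2) = Real.sqrt q / 2) :
    Real.cos (3 * (σ * π / 2)) ≤ 0 ∧
    ∀ (ι : Type) (_ : Fintype ι) (a : ι → ℝ), (∀ x, a x ∈ Set.Icc (0:ℝ) 1) →
      2 * ‖Complex.exp (Complex.I * (σ * π / 2)) - 1‖ * (1 + Real.sqrt q) ≤
        ‖2 * (Complex.exp (Complex.I * (3 * (σ * π / 2))) - 1) +
          ((∑ x : ι, 2 * a x : ℝ) : ℂ) *
            (Complex.exp (Complex.I * (σ * π / 2)) - Complex.exp (Complex.I * (σ * π))) *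
            ((Real.cos (3 * (σ * π / 2)) : ℝ) : ℂ)‖ :=
  stmt4_general q σ hq3 hσ0 hσ1 hcos
end

section
/- Let E be a finite set, and for S ⊆ E let k(ω) denote the number of connected components of the subgraph with open edge set ω of a finite graph G = (V,E). For the random-cluster probability measure φ with parameters p ∈ (0,1) and q ≥ 1, and an increasing event A, the function p ↦ φ_{p}(A) is non-decreasing in p. -/
open Finset

/-- Number of connected components of the subgraph of open edges. -/
noncomputable def rcClusters0 {V : Type} (G : SimpleGraph V) (ω : Sym2 V → Bool) : ℕ :=
  Nat.card (Quotient (Relation.EqvGen.setoid (fun x y => G.Adj x y ∧ ω s(x, y) = true)))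

/-- Number of open edges. -/
def rcOpen {V : Type} [Fintype V] [DecidableEq V] (G : SimpleGraph V)
    [DecidableRel G.Adj] (ω : Sym2 V → Bool) : ℕ :=
  (G.edgeFinset.filter (fun e => ω e = true)).card

/-- Random-cluster weight `q^{k(ω)} p^{o(ω)} (1-p)^{|E|-o(ω)}`. -/
noncomputable def rcWeight0 {V : Type} [Fintype V] [DecidableEq V] (G : SimpleGraph V)
    [DecidableRel G.Adj] (p q : ℝ) (ω : Sym2 V → Bool) : ℝ :=
  q ^ rcClusters0 G ω * p ^ rcOpen G ω * (1 - p) ^ (G.edgeFinset.card - rcOpen G ω)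

/-- Random-cluster probability of an event `A`. -/
noncomputable def rcProb0 {V : Type} [Fintype V] [DecidableEq V] (G : SimpleGraph V)
    [DecidableRel G.Adj] (p q : ℝ) (A : Finset (Sym2 V → Bool)) : ℝ :=
  (∑ ω ∈ A, rcWeight0 G p q ω) / ∑ ω : Sym2 V → Bool, rcWeight0 G p q ω

/-!
Write the weight as `(1 - p)^|E| q^k(ω) θ^o(ω)` with `θ = p / (1 - p)`, which increases with `p`.
By Holley's inequality it suffices to check the lattice condition
`φ_{p₁}(a) φ_{p₂}(b) ≤ φ_{p₁}(a ⊓ b) φ_{p₂}(a ⊔ b)`. The open-edge count `o` is modular and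
`o(a ⊓ b) ≤ o(a)`, so the `θ`-factors satisfy it because `θ₁ ≤ θ₂`; the `q`-factors satisfy it
because `q ≥ 1` and the cluster count `k` is supermodular. Supermodularity holds for the number of
classes of the equivalence closure of any relation on a finite type: adding one pair lowers that
number by one exactly when the pair joins two different classes, and this becomes less likely as
the relation grows.
-/

namespace Relation

variable {α : Type*}

def single (x y : α) : α → α → Prop := fun a b => a = x ∧ b = y

noncomputable def numClasses (r : α → α → Prop) : ℕ := Nat.card (Quotient (EqvGen.setoid r))

theorem eqvGen_sup_single_iff {r : α → α → Prop} {x y a b : α} :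
    EqvGen (r ⊔ single x y) a b ↔
      EqvGen r a b ∨ (EqvGen r a x ∧ EqvGen r y b) ∨ (EqvGen r a y ∧ EqvGen r x b) := by
  constructor
  · intro h
    induction h with
    | rel u v huv =>
      rcases huv with huv | ⟨rfl, rfl⟩
      · exact .inl (.rel _ _ huv)
      · exact .inr (.inl ⟨.refl _, .refl _⟩)
    | refl u => exact .inl (.refl u)
    | symm u v _ ih =>
      rcases ih with h | ⟨h₁, h₂⟩ | ⟨h₁, h₂⟩
      · exact .inl h.symm
      · exact .inr (.inr ⟨h₂.symm, h₁.symm⟩)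
      · exact .inr (.inl ⟨h₂.symm, h₁.symm⟩)
    | trans u v w _ _ ih₁ ih₂ =>
      rcases ih₁ with h | ⟨h₁, h₂⟩ | ⟨h₁, h₂⟩ <;> rcases ih₂ with k | ⟨k₁, k₂⟩ | ⟨k₁, k₂⟩
      · exact .inl (h.trans _ _ _ k)
      · exact .inr (.inl ⟨h.trans _ _ _ k₁, k₂⟩)
      · exact .inr (.inr ⟨h.trans _ _ _ k₁, k₂⟩)
      · exact .inr (.inl ⟨h₁, h₂.trans _ _ _ k⟩)
      · exact .inr (.inl ⟨h₁, k₂⟩)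
      · exact .inl (h₁.trans _ _ _ k₂)
      · exact .inr (.inr ⟨h₁, h₂.trans _ _ _ k⟩)
      · exact .inl (h₁.trans _ _ _ k₂)
      · exact .inr (.inr ⟨h₁, k₂⟩)
  · have hle : r ≤ r ⊔ single x y := le_sup_left
    have hxy : EqvGen (r ⊔ single x y) x y := .rel _ _ (.inr ⟨rfl, rfl⟩)
    rintro (h | ⟨h₁, h₂⟩ | ⟨h₁, h₂⟩)
    · exact h.mono hle
    · exact (h₁.mono hle).trans _ _ _ (hxy.trans _ _ _ (h₂.mono hle))
    · exact (h₁.mono hle).trans _ _ _ (hxy.symm.trans _ _ _ (h₂.mono hle))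

theorem numClasses_antitone [Finite α] : Antitone (numClasses (α := α)) := fun _ _ h =>
  Nat.card_le_card_of_surjective _
    (Quotient.map_surjective (f := id) (fun a b hab => EqvGen.mono h a b hab)
      Function.surjective_id)

theorem numClasses_sup_single_of_eqvGen {r : α → α → Prop} {x y : α} (hxy : EqvGen r x y) :
    numClasses (r ⊔ single x y) = numClasses r := by
  have : EqvGen.setoid (r ⊔ single x y) = EqvGen.setoid r := by
    ext a b
    refine eqvGen_sup_single_iff.trans ⟨?_, .inl⟩
    rintro (h | ⟨h₁, h₂⟩ | ⟨h₁, h₂⟩)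
    · exact h
    · exact h₁.trans _ _ _ (hxy.trans _ _ _ h₂)
    · exact h₁.trans _ _ _ (hxy.symm.trans _ _ _ h₂)
  rw [numClasses, numClasses, this]

-- Merging the classes of `x` and `y` leaves every class other than that of `y` unchanged.
theorem numClasses_sup_single_add_one [Finite α] {r : α → α → Prop} {x y : α}
    (hxy : ¬ EqvGen r x y) : numClasses (r ⊔ single x y) + 1 = numClasses r := by
  classical
  set π : Quotient (EqvGen.setoid r) → Quotient (EqvGen.setoid (r ⊔ single x y)) :=
    Quotient.map id fun a b hab => EqvGen.mono le_sup_left a b hab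
  have hπ : Function.Bijective fun c : {c // c ≠ ⟦y⟧} => π c.1 := by
    constructor
    · rintro ⟨c, hc⟩ ⟨d, hd⟩ hcd
      induction c using Quotient.inductionOn with | h a => ?_
      induction d using Quotient.inductionOn with | h b => ?_
      rcases eqvGen_sup_single_iff.mp (Quotient.exact hcd) with h | ⟨-, h⟩ | ⟨h, -⟩
      · exact Subtype.ext (Quotient.sound h)
      · exact absurd (Quotient.sound h.symm) hd
      · exact absurd (Quotient.sound h) hc
    · intro c
      induction c using Quotient.inductionOn with | h a => ?_
      by_cases ha : (⟦a⟧ : Quotient (EqvGen.setoid r)) = ⟦y⟧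
      · refine ⟨⟨⟦x⟧, fun h => hxy (Quotient.exact h)⟩, Quotient.sound ?_⟩
        exact (EqvGen.rel _ _ (.inr ⟨rfl, rfl⟩)).trans _ _ _
          ((Quotient.exact ha).mono le_sup_left).symm
      · exact ⟨⟨⟦a⟧, ha⟩, rfl⟩
  rw [numClasses, numClasses, ← Nat.card_congr (Equiv.ofBijective _ hπ),
    ← Finite.card_option, Nat.card_congr (Equiv.optionSubtypeNe _)]

theorem numClasses_sup_single_add_le [Finite α] {r s : α → α → Prop} (hrs : r ≤ s) (x y : α) :
    numClasses (r ⊔ single x y) + numClasses s ≤ numClasses r + numClasses (s ⊔ single x y) := by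
  by_cases hs : EqvGen s x y
  · rw [numClasses_sup_single_of_eqvGen hs]
    have := numClasses_antitone (le_sup_left : r ≤ r ⊔ single x y)
    omega
  · have hr := numClasses_sup_single_add_one fun h => hs (h.mono hrs)
    have := numClasses_sup_single_add_one hs
    omega

theorem numClasses_sup_finset_add_le [Finite α] {r s : α → α → Prop} (hrs : r ≤ s)
    (D : Finset (α × α)) :
    numClasses (r ⊔ fun a b => (a, b) ∈ D) + numClasses s ≤
      numClasses r + numClasses (s ⊔ fun a b => (a, b) ∈ D) := by
  classical
  induction D using Finset.induction_on with
  | empty =>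
    have hempty (t : α → α → Prop) : (t ⊔ fun a b => (a, b) ∈ (∅ : Finset (α × α))) = t := by
      ext; simp
    rw [hempty, hempty, add_comm]
  | insert p D _ ih =>
    obtain ⟨x, y⟩ := p
    have hinsert (t : α → α → Prop) : (t ⊔ fun a b => (a, b) ∈ insert (x, y) D) =
        (t ⊔ fun a b => (a, b) ∈ D) ⊔ single x y := by
      ext a b
      simp only [Pi.sup_apply, sup_Prop_eq, mem_insert, Prod.mk.injEq, single]
      tauto
    have := numClasses_sup_single_add_le (sup_le_sup_right hrs fun a b => (a, b) ∈ D) x y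
    rw [hinsert, hinsert]
    omega

theorem numClasses_add_numClasses_le [Finite α] (r s : α → α → Prop) :
    numClasses r + numClasses s ≤ numClasses (r ⊓ s) + numClasses (r ⊔ s) := by
  classical
  have : Fintype α := Fintype.ofFinite α
  have h := numClasses_sup_finset_add_le (inf_le_right : r ⊓ s ≤ s)
    {p : α × α | r p.1 p.2}
  have hr : (r ⊓ s ⊔ fun a b => (a, b) ∈ ({p : α × α | r p.1 p.2} : Finset _)) = r := by
    ext a b
    simp only [Pi.sup_apply, Pi.inf_apply, sup_Prop_eq, inf_Prop_eq, mem_filter, mem_univ,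
      true_and]
    tauto
  have hs : (s ⊔ fun a b => (a, b) ∈ ({p : α × α | r p.1 p.2} : Finset _)) = r ⊔ s := by
    ext a b
    simp only [Pi.sup_apply, sup_Prop_eq, mem_filter, mem_univ, true_and]
    tauto
  rw [hr, hs] at h
  omega

end Relation

theorem sum_mul_sum_le_of_holley {α β : Type*} [DistribLattice α] [Fintype α] [CommSemiring β]
    [LinearOrder β] [IsStrictOrderedRing β] [ExistsAddOfLE β] {w₁ w₂ : α → β}
    (hw₁ : 0 ≤ w₁) (hw₂ : 0 ≤ w₂) (h : ∀ a b, w₁ a * w₂ b ≤ w₁ (a ⊓ b) * w₂ (a ⊔ b))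
    {A : Finset α} (hA : IsUpperSet (A : Set α)) :
    (∑ a ∈ A, w₁ a) * ∑ a, w₂ a ≤ (∑ a ∈ A, w₂ a) * ∑ a, w₁ a := by
  classical
  set Z₁ := ∑ a, w₁ a
  set Z₂ := ∑ a, w₂ a
  have hZ₁ : 0 ≤ Z₁ := sum_nonneg fun a _ => hw₁ a
  have hZ₂ : 0 ≤ Z₂ := sum_nonneg fun a _ => hw₂ a
  have hμ : Monotone fun a => if a ∈ A then (1 : β) else 0 := by
    intro a b hab
    dsimp only
    split_ifs with ha hb hb
    · exact le_rfl
    · exact absurd (hA hab ha) hb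
    · exact zero_le_one
    · exact le_rfl
  -- Rescaling by the other partition function equalises the total masses.
  have key := holley (μ := fun a => if a ∈ A then (1 : β) else 0)
    (f := fun a => w₁ a * Z₂) (g := fun a => w₂ a * Z₁)
    (fun a => by positivity) (fun a => mul_nonneg (hw₁ a) hZ₂)
    (fun a => mul_nonneg (hw₂ a) hZ₁) hμ (by simp only [← sum_mul, Z₁, Z₂, mul_comm])
    (fun a b => by
      calc w₁ a * Z₂ * (w₂ b * Z₁) = w₁ a * w₂ b * (Z₂ * Z₁) := by ring
        _ ≤ w₁ (a ⊓ b) * w₂ (a ⊔ b) * (Z₂ * Z₁) :=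
          mul_le_mul_of_nonneg_right (h a b) (mul_nonneg hZ₂ hZ₁)
        _ = w₁ (a ⊓ b) * Z₂ * (w₂ (a ⊔ b) * Z₁) := by ring)
  simpa only [ite_mul, one_mul, zero_mul, sum_ite_mem, univ_inter, sum_mul] using key

theorem pow_mul_pow_le_pow_mul_pow {R : Type*} [CommSemiring R] [PartialOrder R]
    [IsOrderedRing R] {x y : R} (hx : 0 ≤ x) (hxy : x ≤ y) {m n m' n' : ℕ} (hm : m' ≤ m)
    (hmn : m' + n' = m + n) : x ^ m * y ^ n ≤ x ^ m' * y ^ n' := by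
  have hy : 0 ≤ y := hx.trans hxy
  obtain ⟨d, rfl⟩ := Nat.exists_eq_add_of_le hm
  obtain rfl : n' = n + d := by omega
  calc x ^ (m' + d) * y ^ n = x ^ m' * y ^ n * x ^ d := by ring
    _ ≤ x ^ m' * y ^ n * y ^ d := by gcongr
    _ = x ^ m' * y ^ (n + d) := by ring

section RandomCluster

variable {V : Type} (G : SimpleGraph V)

def openRel (ω : Sym2 V → Bool) : V → V → Prop := fun x y => G.Adj x y ∧ ω s(x, y) = true

theorem rcClusters0_eq_numClasses (ω : Sym2 V → Bool) :
    rcClusters0 G ω = Relation.numClasses (openRel G ω) := rfl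

theorem openRel_inf (a b : Sym2 V → Bool) : openRel G (a ⊓ b) = openRel G a ⊓ openRel G b := by
  ext x y
  simp only [openRel, Pi.inf_apply, inf_Prop_eq, Bool.min_eq_and, Bool.and_eq_true]
  tauto

theorem openRel_sup (a b : Sym2 V → Bool) : openRel G (a ⊔ b) = openRel G a ⊔ openRel G b := by
  ext x y
  simp only [openRel, Pi.sup_apply, sup_Prop_eq, Bool.max_eq_or, Bool.or_eq_true]
  tauto

theorem rcClusters0_add_le [Finite V] (a b : Sym2 V → Bool) :
    rcClusters0 G a + rcClusters0 G b ≤ rcClusters0 G (a ⊓ b) + rcClusters0 G (a ⊔ b) := by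
  simpa only [rcClusters0_eq_numClasses, openRel_inf, openRel_sup] using
    Relation.numClasses_add_numClasses_le (openRel G a) (openRel G b)

variable [Fintype V] [DecidableEq V] [DecidableRel G.Adj]

theorem rcOpen_inf_add_rcOpen_sup (a b : Sym2 V → Bool) :
    rcOpen G (a ⊓ b) + rcOpen G (a ⊔ b) = rcOpen G a + rcOpen G b := by
  simp only [rcOpen, Pi.inf_apply, Pi.sup_apply, Bool.min_eq_and, Bool.and_eq_true,
    Bool.max_eq_or, Bool.or_eq_true, filter_and, filter_or]
  exact card_inter_add_card_union _ _

theorem rcOpen_mono : Monotone (rcOpen G) := fun _ _ hab =>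
  card_le_card (monotone_filter_right _ fun e _ he => le_antisymm (Bool.le_true _) (he ▸ hab e))

theorem rcOpen_le_card (ω : Sym2 V → Bool) : rcOpen G ω ≤ #G.edgeFinset := card_filter_le _ _

theorem rcWeight0_eq {p : ℝ} (hp : p < 1) (q : ℝ) (ω : Sym2 V → Bool) :
    rcWeight0 G p q ω =
      (1 - p) ^ #G.edgeFinset * (q ^ rcClusters0 G ω * (p / (1 - p)) ^ rcOpen G ω) := by
  have hp' : 1 - p ≠ 0 := by linarith
  rw [rcWeight0, pow_sub₀ _ hp' (rcOpen_le_card G ω), div_pow]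
  field_simp

theorem rcWeight0_pos {p q : ℝ} (hp₀ : 0 < p) (hp₁ : p < 1) (hq : 0 < q) (ω : Sym2 V → Bool) :
    0 < rcWeight0 G p q ω := by
  have : 0 < 1 - p := by linarith
  unfold rcWeight0
  positivity

theorem rcWeight0_mul_le_inf_mul_sup {p₁ p₂ q : ℝ} (hq : 1 ≤ q) (h0 : 0 ≤ p₁) (h12 : p₁ ≤ p₂)
    (h1 : p₂ < 1) (a b : Sym2 V → Bool) :
    rcWeight0 G p₁ q a * rcWeight0 G p₂ q b ≤
      rcWeight0 G p₁ q (a ⊓ b) * rcWeight0 G p₂ q (a ⊔ b) := by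
  have hp₁ : p₁ < 1 := h12.trans_lt h1
  have hr₁ : 0 < 1 - p₁ := by linarith
  have hθ : p₁ / (1 - p₁) ≤ p₂ / (1 - p₂) := by gcongr; linarith
  have hq' : q ^ rcClusters0 G a * q ^ rcClusters0 G b ≤
      q ^ rcClusters0 G (a ⊓ b) * q ^ rcClusters0 G (a ⊔ b) := by
    rw [← pow_add, ← pow_add]
    exact pow_le_pow_right₀ hq (rcClusters0_add_le G a b)
  have hθ' := pow_mul_pow_le_pow_mul_pow (by positivity) hθ
    (rcOpen_mono G inf_le_left) (rcOpen_inf_add_rcOpen_sup G a b)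
  simp only [rcWeight0_eq G hp₁, rcWeight0_eq G h1]
  calc _ = (1 - p₁) ^ #G.edgeFinset * (1 - p₂) ^ #G.edgeFinset *
        (q ^ rcClusters0 G a * q ^ rcClusters0 G b) *
        ((p₁ / (1 - p₁)) ^ rcOpen G a * (p₂ / (1 - p₂)) ^ rcOpen G b) := by ring
    _ ≤ (1 - p₁) ^ #G.edgeFinset * (1 - p₂) ^ #G.edgeFinset *
        (q ^ rcClusters0 G (a ⊓ b) * q ^ rcClusters0 G (a ⊔ b)) *
        ((p₁ / (1 - p₁)) ^ rcOpen G (a ⊓ b) * (p₂ / (1 - p₂)) ^ rcOpen G (a ⊔ b)) := by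
      have : 0 < 1 - p₂ := by linarith
      have : 0 ≤ p₂ := h0.trans h12
      gcongr
    _ = _ := by ring

end RandomCluster

/-- For `q ≥ 1` and an increasing event `A`, `p ↦ φ_p(A)` is non-decreasing on `(0,1)`. -/
theorem stmt11 {V : Type} [Fintype V] [DecidableEq V] (G : SimpleGraph V)
    [DecidableRel G.Adj] (q : ℝ) (hq : 1 ≤ q) (A : Finset (Sym2 V → Bool))
    (hA : ∀ ω ω' : Sym2 V → Bool, ω ≤ ω' → ω ∈ A → ω' ∈ A)
    (p₁ p₂ : ℝ) (h0 : 0 < p₁) (h12 : p₁ ≤ p₂) (h1 : p₂ < 1) :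
    rcProb0 G p₁ q A ≤ rcProb0 G p₂ q A := by
  have hq₀ : 0 < q := one_pos.trans_le hq
  have hw₁ := rcWeight0_pos G h0 (h12.trans_lt h1) hq₀
  have hw₂ := rcWeight0_pos G (h0.trans_le h12) h1 hq₀
  rw [rcProb0, rcProb0, div_le_div_iff₀ (sum_pos (fun ω _ => hw₁ ω) univ_nonempty)
    (sum_pos (fun ω _ => hw₂ ω) univ_nonempty)]
  exact sum_mul_sum_le_of_holley (fun ω => (hw₁ ω).le) (fun ω => (hw₂ ω).le)
    (rcWeight0_mul_le_inf_mul_sup G hq h0.le h12 h1) fun ω ω' => hA ω ω'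
end

section
/- Let ρ > 1, C ≥ 4 integers with (C+1) ≤ ρ^C. Let K ⊆ {k ∈ ℕ : k ≤ log_ρ(n/(9C²))} with |K| ≥ (1/2)·log_ρ(n/(9C²)). Then one can choose at least (1/(10C))·log_ρ(n/(9C²)) indices k ∈ K such that the intervals I_k = [−(4C+1)ρ^k, −ρ^k] are pairwise disjoint. -/
/-- Given `ρ > 1`, `C ≥ 4` with `C + 1 ≤ ρ^C`, and a set `K` of at least half of the scales
`k ≤ log_ρ(n/(9C²))`, one can find at least `(1/(10C))·log_ρ(n/(9C²))` indices `k ∈ K` whose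
intervals `I_k = [−(4C+1)ρ^k, −ρ^k]` are pairwise disjoint. -/
theorem stmt18 (ρ : ℝ) (hρ : 1 < ρ) (C : ℕ) (hC : 4 ≤ C) (hpow : (C : ℝ) + 1 ≤ ρ ^ C)
    (n : ℝ) (hn : 1 ≤ n)
    (K : Finset ℕ) (hK : ∀ k ∈ K, (k : ℝ) ≤ Real.logb ρ (n / (9 * C ^ 2)))
    (hcard : (K.card : ℝ) ≥ (1 / 2) * Real.logb ρ (n / (9 * C ^ 2))) :
    ∃ K' ⊆ K, ((K'.card : ℝ) ≥ (1 / (10 * C)) * Real.logb ρ (n / (9 * C ^ 2)) ∧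
      ∀ k ∈ K', ∀ k' ∈ K', k ≠ k' →
        Disjoint (Set.Icc (-(4 * (C : ℝ) + 1) * ρ ^ k) (-(ρ ^ k)))
          (Set.Icc (-(4 * (C : ℝ) + 1) * ρ ^ k') (-(ρ ^ k')))) := by
  set L := Real.logb ρ (n / (9 * C ^ 2)) with hL
  have hCpos : (0:ℝ) < C := by positivity
  have hC4 : (4:ℝ) ≤ C := by exact_mod_cast hC
  -- key disjointness fact for k + 2C ≤ k'
  have key : ∀ k k' : ℕ, k + 2 * C ≤ k' →
      Disjoint (Set.Icc (-(4 * (C : ℝ) + 1) * ρ ^ k) (-(ρ ^ k)))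
        (Set.Icc (-(4 * (C : ℝ) + 1) * ρ ^ k') (-(ρ ^ k'))) := by
    intro k k' hkk'
    have hρ0 : (0:ℝ) < ρ := lt_trans one_pos hρ
    have h1 : ρ ^ (k + 2 * C) ≤ ρ ^ k' := pow_le_pow_right₀ hρ.le hkk'
    have h2 : ((C:ℝ) + 1) ^ 2 ≤ ρ ^ (2 * C) := by
      have := mul_le_mul hpow hpow (by positivity) (by positivity)
      calc ((C:ℝ)+1)^2 = ((C:ℝ)+1) * ((C:ℝ)+1) := sq ((C:ℝ)+1)
        _ ≤ ρ ^ C * ρ ^ C := this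
        _ = ρ ^ (2 * C) := by rw [← pow_add]; ring_nf
    have hpk : (0:ℝ) < ρ ^ k := by positivity
    have h3 : (4 * (C:ℝ) + 1) * ρ ^ k < ρ ^ k' := by
      have : (4 * (C:ℝ) + 1) < ((C:ℝ)+1)^2 := by nlinarith
      calc (4 * (C:ℝ) + 1) * ρ ^ k < ((C:ℝ)+1)^2 * ρ ^ k := by nlinarith
        _ ≤ ρ ^ (2 * C) * ρ ^ k := by nlinarith
        _ = ρ ^ (k + 2 * C) := by rw [← pow_add]; ring_nf
        _ ≤ ρ ^ k' := h1
    rw [Set.disjoint_left]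
    rintro x ⟨hx1, -⟩ ⟨-, hx2⟩
    have : -ρ ^ k' < -(4 * (C:ℝ) + 1) * ρ ^ k := by nlinarith
    linarith
  rcases le_or_gt L 0 with hL0 | hL0
  · refine ⟨∅, Finset.empty_subset _, ?_, by simp⟩
    simp only [Finset.card_empty, Nat.cast_zero]
    have : (1 / (10 * (C:ℝ))) * L ≤ 0 := mul_nonpos_of_nonneg_of_nonpos (by positivity) hL0
    linarith
  rcases le_or_gt L (10 * C) with hLs | hLs
  · -- singleton case
    have hKne : K.Nonempty := by
      rw [← Finset.card_pos]
      by_contra h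
      push_neg at h
      interval_cases h' : K.card
      · simp [h'] at hcard; linarith
    obtain ⟨k, hk⟩ := hKne
    refine ⟨{k}, by simpa using hk, ?_, ?_⟩
    · simp only [Finset.card_singleton, Nat.cast_one]
      rw [ge_iff_le, div_mul_eq_mul_div, div_le_one (by positivity)]
      linarith
    · intro a ha b hb hab
      simp only [Finset.mem_singleton] at ha hb
      exact absurd (ha.trans hb.symm) hab
  · -- pigeonhole on residues mod 2C
    have h2C : 0 < 2 * C := by omega
    obtain ⟨r, hr, hfib⟩ := Finset.exists_le_card_fiber_of_mul_le_card_of_maps_to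
      (f := fun k => k % (2 * C)) (t := Finset.range (2 * C))
      (fun a _ => Finset.mem_range.mpr (Nat.mod_lt _ h2C))
      ⟨0, Finset.mem_range.mpr h2C⟩
      (by simpa [Finset.card_range] using Nat.mul_div_le K.card (2 * C))
    set K' : Finset ℕ := {x ∈ K | x % (2 * C) = r} with hK'
    refine ⟨K', Finset.filter_subset _ _, ?_, ?_⟩
    · -- cardinality
      have hdm := Nat.div_add_mod K.card (2 * C)
      have hmod : K.card % (2 * C) < 2 * C := Nat.mod_lt _ h2C
      have h1 : (2 * C) * (K.card / (2 * C)) + (2 * C) > K.card := by omega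
      have h2 : K.card / (2 * C) ≤ K'.card := hfib
      have h1' : (2 * (C:ℝ)) * ((K.card / (2 * C) : ℕ) : ℝ) + 2 * C > K.card := by
        exact_mod_cast h1
      have h2' : ((K.card / (2 * C) : ℕ) : ℝ) ≤ K'.card := by exact_mod_cast h2
      have hc' : (K.card : ℝ) ≥ (1/2) * L := hcard
      rw [ge_iff_le, div_mul_eq_mul_div, div_le_iff₀ (by positivity)]
      nlinarith
    · intro k hk k' hk' hne
      simp only [hK', Finset.mem_filter] at hk hk'
      have hmod : k % (2 * C) = k' % (2 * C) := hk.2.trans hk'.2.symm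
      rcases lt_or_gt_of_ne hne with h | h
      · have hd : (2 * C) ∣ k' - k := (Nat.modEq_iff_dvd' h.le).mp hmod
        have := Nat.le_of_dvd (by omega) hd
        exact key k k' (by omega)
      · have hd : (2 * C) ∣ k - k' := (Nat.modEq_iff_dvd' h.le).mp hmod.symm
        have := Nat.le_of_dvd (by omega) hd
        exact (key k' k (by omega)).symm
end
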